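/- arXiv:1906.02411 — 3 statements merged into one kernel-verified Lean document; each statement's English description precedes it below -/
import Mathlib

section
/- For |X| = n, the diameter Δ of RP(X) under the metric d_HP satisfies (n−1)(n−2)/2 + 1 ≤ Δ ≤ (n−1)(n−2). In particular, for a caterpillar tree C whose inclusion-maximal proper cluster is X \ {a}, and a tree T whose only proper cluster is {a, b} for some b ≠ a, the distance is d_HP(C, T) = (n−1)(n−2)/2 + 1. -/
open Finset

variable {X : Type*} [DecidableEq X] [Fintype X]

/-- A hierarchy on a finite set `X`: a collection of subsets of `X` containing `X`
and all singletons, whose members are nonempty and pairwise disjoint or nested. -/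
def IsHierarchy (H : Finset (Finset X)) : Prop :=
  (Finset.univ ∈ H) ∧ (∀ x : X, {x} ∈ H) ∧ (∀ A ∈ H, A.Nonempty) ∧
    ∀ A ∈ H, ∀ B ∈ H, A ∩ B = ∅ ∨ A ⊆ B ∨ B ⊆ A

/-- A hierarchy-preserving map from `H` to `H'`: fixes singletons, is enveloping and
subset-preserving. -/
def IsHPMap (H H' : Finset (Finset X)) (δ : Finset X → Finset X) : Prop :=
  (∀ A ∈ H, δ A ∈ H') ∧ (∀ x : X, δ {x} = {x}) ∧
    (∀ A ∈ H, A ⊆ δ A) ∧ ∀ A ∈ H, ∀ B ∈ H, A ⊂ B → δ A ⊂ δ B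

/-- `T ≤_HP T'`: there exists a hierarchy-preserving map from `H(T)` to `H(T')`. -/
def LeHP (H H' : Finset (Finset X)) : Prop :=
  ∃ δ : Finset X → Finset X, IsHPMap H H' δ

/-- `A` is an inclusion-maximal (proper) subcluster of `D` in `H`. -/
def IsMaxSub (H : Finset (Finset X)) (A D : Finset X) : Prop :=
  A ∈ H ∧ D ∈ H ∧ A ⊂ D ∧ ∀ C ∈ H, ¬(A ⊂ C ∧ C ⊂ D)

/-- The binding of `H` at `A ∪ B`: delete the non-singleton members of `{A, B}` and
add `A ∪ B`. -/
def binding (H : Finset (Finset X)) (A B : Finset X) : Finset (Finset X) :=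
  (H.filter fun C => ¬((C = A ∨ C = B) ∧ 1 < C.card)) ∪ {A ∪ B}

/-- The proper clusters of a hierarchy: members that are neither `X` nor singletons. -/
def properClusters (H : Finset (Finset X)) : Finset (Finset X) :=
  H.filter fun A => A ≠ Finset.univ ∧ 1 < A.card

/-- The rank of a tree/hierarchy: `f(T) = ∑_{A ∈ P(T)} (|A| - 1)`. -/
def rankHP (H : Finset (Finset X)) : ℕ :=
  ∑ A ∈ properClusters H, (A.card - 1)

/-- `T'` covers `T` in the partial order `≤_HP`. -/
def CoversHP (H H' : Finset (Finset X)) : Prop :=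
  LeHP H H' ∧ H ≠ H' ∧
    ∀ H'' : Finset (Finset X), IsHierarchy H'' → LeHP H H'' → LeHP H'' H' → H'' = H ∨ H'' = H'

/-- Adjacency in the Hasse diagram of `≤_HP` on hierarchies. -/
def HasseAdj (H H' : Finset (Finset X)) : Prop :=
  IsHierarchy H ∧ IsHierarchy H' ∧ (CoversHP H H' ∨ CoversHP H' H)

/-- There is a walk of length `n` between `H` and `H'` in the Hasse diagram. -/
def HasPathHP (H H' : Finset (Finset X)) (n : ℕ) : Prop :=
  ∃ c : ℕ → Finset (Finset X), c 0 = H ∧ c n = H' ∧ ∀ i < n, HasseAdj (c i) (c (i + 1))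

/-- `d` is the geodesic distance between `H` and `H'` in the Hasse diagram of `≤_HP`. -/
def DistHP (H H' : Finset (Finset X)) (d : ℕ) : Prop :=
  HasPathHP H H' d ∧ ∀ m : ℕ, HasPathHP H H' m → d ≤ m

/-- A caterpillar tree: its proper clusters form a strictly increasing chain
`C₂ ⊂ C₃ ⊂ ⋯ ⊂ C_{n-1}` with `|C_k| = k`. -/
def IsCaterpillar (H : Finset (Finset X)) : Prop :=
  IsHierarchy H ∧ ∃ C : ℕ → Finset X,
    (∀ k, 2 ≤ k → k ≤ Fintype.card X - 1 → (C k).card = k) ∧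
    (∀ k l, 2 ≤ k → k < l → l ≤ Fintype.card X - 1 → C k ⊂ C l) ∧
    properClusters H = (Finset.Icc 2 (Fintype.card X - 1)).image C

/-!
Binding two sibling clusters raises the rank `f` by exactly one. If `H < H'` via `δ`, take a
cluster `D` of `H'` maximal among those that are new or are images of clusters moved by `δ`;
binding two maximal subclusters of `D` in `H` gives `K` with `H ≤ K ≤ H'` and `f K = f H + 1`.
Together with the monotonicity of `f` (fibres of `δ` are disjoint inside their image), this
shows that covers raise the rank by one and that comparable hierarchies are joined by walks of
length equal to their rank difference. A walk from `C` to `T` shorter than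
`f C - f T + 2 = f C + 1` can never climb, so it would give `T ≤ C`, which fails since `{a, b}`
lies in no proper cluster of `C`; the walk through the star tree has length `f C + 1`. The upper
bound is the walk `T₁ → star → T₂`, since a laminar family of proper subsets of an `n`-set has
rank at most `(n - 1)(n - 2) / 2`.
-/

variable {H H' H'' : Finset (Finset X)} {δ : Finset X → Finset X} {A B D E F : Finset X}

theorem mem_properClusters : A ∈ properClusters H ↔ A ∈ H ∧ A ≠ univ ∧ 1 < A.card :=
  mem_filter

theorem properClusters_subset : properClusters H ⊆ H := filter_subset _ _

omit [DecidableEq X] [Fintype X] in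
theorem LeHP.of_subset (h : H ⊆ H') : LeHP H H' :=
  ⟨id, fun _ hA => h hA, fun _ => rfl, fun _ _ => subset_rfl, fun _ _ _ _ h => h⟩

omit [DecidableEq X] [Fintype X] in
theorem LeHP.trans (h : LeHP H H') (h' : LeHP H' H'') : LeHP H H'' := by
  obtain ⟨δ, hmem, hsing, hsub, hmono⟩ := h
  obtain ⟨δ', hmem', hsing', hsub', hmono'⟩ := h'
  exact ⟨δ' ∘ δ, fun A hA => hmem' _ (hmem A hA), fun x => by simp [hsing, hsing'],
    fun A hA => (hsub A hA).trans (hsub' _ (hmem A hA)),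
    fun A hA B hB hAB => hmono' _ (hmem A hA) _ (hmem B hB) (hmono A hA B hB hAB)⟩

namespace IsHierarchy

theorem nonempty (hH : IsHierarchy H) (hA : A ∈ H) : A.Nonempty := hH.2.2.1 A hA

theorem subset_or_subset_of_mem (hH : IsHierarchy H) (hA : A ∈ H) (hB : B ∈ H) {x : X}
    (hxA : x ∈ A) (hxB : x ∈ B) : A ⊆ B ∨ B ⊆ A := by
  refine (hH.2.2.2 A hA B hB).resolve_left fun h => ?_
  exact notMem_empty x (h ▸ mem_inter.2 ⟨hxA, hxB⟩)

end IsHierarchy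

namespace IsHPMap

omit [DecidableEq X] in
theorem map_univ (hδ : IsHPMap H H' δ) (hu : univ ∈ H) : δ univ = univ :=
  univ_subset_iff.1 (hδ.2.2.1 _ hu)

theorem mem_properClusters (hδ : IsHPMap H H' δ) (hu : univ ∈ H)
    (hA : A ∈ properClusters H) : δ A ∈ properClusters H' := by
  obtain ⟨hAH, hAu, hAc⟩ := _root_.mem_properClusters.1 hA
  have hlt := hδ.2.2.2 A hAH univ hu (ssubset_univ_iff.2 hAu)
  rw [hδ.map_univ hu] at hlt
  exact _root_.mem_properClusters.2 ⟨hδ.1 A hAH, ssubset_univ_iff.1 hlt,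
    hAc.trans_le (card_le_card (hδ.2.2.1 A hAH))⟩

theorem disjoint_of_map_eq (hδ : IsHPMap H H' δ) (hH : IsHierarchy H) (hA : A ∈ H)
    (hB : B ∈ H) (hne : A ≠ B) (heq : δ A = δ B) : Disjoint A B := by
  rw [disjoint_iff_inter_eq_empty]
  rcases hH.2.2.2 A hA B hB with h | h | h
  · exact h
  · exact absurd heq (hδ.2.2.2 A hA B hB (ssubset_of_subset_of_ne h hne)).ne
  · exact absurd heq.symm (hδ.2.2.2 B hB A hA (ssubset_of_subset_of_ne h hne.symm)).ne

end IsHPMap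

theorem sum_card_sub_one_le {α : Type*} [DecidableEq α] {S : Finset (Finset α)} {D : Finset α}
    (hS : (S : Set (Finset α)).PairwiseDisjoint id) (hne : ∀ A ∈ S, A.Nonempty)
    (hD : ∀ A ∈ S, A ⊆ D) : ∑ A ∈ S, (A.card - 1) ≤ D.card - 1 := by
  rcases S.eq_empty_or_nonempty with rfl | hSne
  · simp
  have hsum : ∑ A ∈ S, (A.card - 1) + S.card = ∑ A ∈ S, A.card := by
    rw [card_eq_sum_ones, ← sum_add_distrib]
    exact sum_congr rfl fun A hA => Nat.sub_add_cancel (hne A hA).card_pos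
  have hunion : ∑ A ∈ S, A.card ≤ D.card := by
    calc ∑ A ∈ S, A.card = (S.biUnion id).card := (card_biUnion hS).symm
      _ ≤ D.card := card_le_card (biUnion_subset.2 hD)
  have := hSne.card_pos
  omega

theorem rankHP_le_of_leHP (hH : IsHierarchy H) (h : LeHP H H') : rankHP H ≤ rankHP H' := by
  obtain ⟨δ, hδ⟩ := h
  calc rankHP H
      = ∑ D ∈ properClusters H', ∑ A ∈ properClusters H with δ A = D, (A.card - 1) :=
        (sum_fiberwise_of_maps_to (fun _ hA => hδ.mem_properClusters hH.1 hA) _).symm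
    _ ≤ ∑ D ∈ properClusters H', (D.card - 1) := by
        refine sum_le_sum fun D _ => sum_card_sub_one_le ?_ ?_ ?_
        · intro A hA B hB hAB
          obtain ⟨hA, hAD⟩ := mem_filter.1 (mem_coe.1 hA)
          obtain ⟨hB, hBD⟩ := mem_filter.1 (mem_coe.1 hB)
          exact hδ.disjoint_of_map_eq hH (properClusters_subset hA)
            (properClusters_subset hB) hAB (hAD.trans hBD.symm)
        · exact fun A hA => hH.nonempty (properClusters_subset (mem_filter.1 hA).1)
        · intro A hA
          rw [← (mem_filter.1 hA).2]
          exact hδ.2.2.1 A (properClusters_subset (mem_filter.1 hA).1)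

theorem rankHP_add_card_sub_one (hu : univ ∈ H) :
    rankHP H + (Fintype.card X - 1) = ∑ A ∈ H, (A.card - 1) := by
  have hrest : ∑ A ∈ H with ¬(A ≠ univ ∧ 1 < A.card), (A.card - 1) = Fintype.card X - 1 := by
    rw [sum_eq_single_of_mem univ (mem_filter.2 ⟨hu, fun h => h.1 rfl⟩), card_univ]
    intro A hA hAu
    have := (mem_filter.1 hA).2
    grind
  rw [rankHP, properClusters, ← hrest, sum_filter_add_sum_filter_not]

structure IsBindingPair (H : Finset (Finset X)) (E₁ E₂ : Finset X) : Prop where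
  left_mem : E₁ ∈ H
  right_mem : E₂ ∈ H
  disjoint : Disjoint E₁ E₂
  union_notMem : E₁ ∪ E₂ ∉ H
  union_subset_of_ssubset : ∀ F ∈ H, E₁ ⊂ F ∨ E₂ ⊂ F → E₁ ∪ E₂ ⊆ F

omit [Fintype X] in
theorem mem_binding {E₁ E₂ S : Finset X} : S ∈ binding H E₁ E₂ ↔
    (S ∈ H ∧ ¬((S = E₁ ∨ S = E₂) ∧ 1 < S.card)) ∨ S = E₁ ∪ E₂ := by
  rw [binding, mem_union, mem_filter, mem_singleton]

namespace IsBindingPair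

variable {E₁ E₂ S T : Finset X}

theorem inter_union_eq_empty_or_nested (hH : IsHierarchy H) (hp : IsBindingPair H E₁ E₂)
    (hF : F ∈ H) : F ∩ (E₁ ∪ E₂) = ∅ ∨ F ⊆ E₁ ∪ E₂ ∨ E₁ ∪ E₂ ⊆ F := by
  have above {E : Finset X} (hE : E = E₁ ∨ E = E₂) (hEF : E ⊆ F) :
      F ⊆ E₁ ∪ E₂ ∨ E₁ ∪ E₂ ⊆ F := by
    rcases eq_or_ne E F with rfl | hne
    · rcases hE with rfl | rfl <;> simp
    · have hlt : E ⊂ F := ssubset_of_subset_of_ne hEF hne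
      exact .inr (hp.union_subset_of_ssubset F hF (by rcases hE with rfl | rfl <;> simp [hlt]))
  rcases hH.2.2.2 F hF E₁ hp.left_mem with h₁ | h₁ | h₁
  · rcases hH.2.2.2 F hF E₂ hp.right_mem with h₂ | h₂ | h₂
    · exact .inl (by rw [inter_union_distrib_left, h₁, h₂, union_empty])
    · exact .inr (.inl (h₂.trans subset_union_right))
    · exact .inr (above (.inr rfl) h₂)
  · exact .inr (.inl (h₁.trans subset_union_left))
  · exact .inr (above (.inl rfl) h₁)

theorem isHierarchy_binding (hH : IsHierarchy H) (hp : IsBindingPair H E₁ E₂) :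
    IsHierarchy (binding H E₁ E₂) := by
  refine ⟨mem_binding.2 (.inl ⟨hH.1, ?_⟩), fun x => mem_binding.2 (.inl ⟨hH.2.1 x, by simp⟩),
    fun S hS => ?_, fun S hS T hT => ?_⟩
  · rintro ⟨h | h, -⟩ <;>
      exact hp.union_notMem
        (by rw [eq_univ_of_forall (s := E₁ ∪ E₂) fun x => by simp [← h]]; exact hH.1)
  · rcases mem_binding.1 hS with ⟨hS, -⟩ | rfl
    · exact hH.nonempty hS
    · exact (hH.nonempty hp.left_mem).mono subset_union_left
  · rcases mem_binding.1 hS with ⟨hS, -⟩ | rfl <;> rcases mem_binding.1 hT with ⟨hT, -⟩ | rfl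
    · exact hH.2.2.2 S hS T hT
    · exact hp.inter_union_eq_empty_or_nested hH hS
    · rw [inter_comm]
      exact (hp.inter_union_eq_empty_or_nested hH hT).imp_right Or.symm
    · exact .inr (.inl subset_rfl)

theorem eq_of_subset (hH : IsHierarchy H) (hp : IsBindingPair H E₁ E₂) (hS : S = E₁ ∨ S = E₂)
    (hT : T = E₁ ∨ T = E₂) (hST : S ⊆ T) : S = T := by
  rcases hS with rfl | rfl <;> rcases hT with rfl | rfl
  · rfl
  · exact absurd ((disjoint_self_iff_empty _).1 (hp.disjoint.mono_right hST))
      (hH.nonempty hp.left_mem).ne_empty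
  · exact absurd ((disjoint_self_iff_empty _).1 (hp.disjoint.mono_left hST))
      (hH.nonempty hp.right_mem).ne_empty
  · rfl

theorem leHP_binding (hH : IsHierarchy H) (hp : IsBindingPair H E₁ E₂) :
    LeHP H (binding H E₁ E₂) := by
  refine ⟨fun S => if (S = E₁ ∨ S = E₂) ∧ 1 < S.card then E₁ ∪ E₂ else S, fun S hS => ?_,
    fun x => if_neg (by simp), fun S _ => ?_, fun S hS T hT hST => ?_⟩ <;> dsimp only
  · split_ifs with h
    · exact mem_binding.2 (.inr rfl)
    · exact mem_binding.2 (.inl ⟨hS, h⟩)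
  · split_ifs with h
    · rcases h.1 with rfl | rfl
      exacts [subset_union_left, subset_union_right]
    · exact subset_rfl
  · split_ifs with hS' hT' hT'
    · exact absurd (hp.eq_of_subset hH hS'.1 hT'.1 hST.subset) hST.ne
    · refine ssubset_of_subset_of_ne (hp.union_subset_of_ssubset T hT ?_) ?_
      · rcases hS'.1 with rfl | rfl <;> simp [hST]
      · rintro rfl
        exact hp.union_notMem hT
    · rcases hT'.1 with rfl | rfl
      exacts [hST.trans_subset subset_union_left, hST.trans_subset subset_union_right]
    · exact hST

theorem rankHP_binding (hH : IsHierarchy H) (hp : IsBindingPair H E₁ E₂) :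
    rankHP (binding H E₁ E₂) = rankHP H + 1 := by
  have hne : E₁ ≠ E₂ := by
    rintro rfl
    exact (hH.nonempty hp.left_mem).ne_empty ((disjoint_self_iff_empty _).1 hp.disjoint)
  have hremoved : ∑ A ∈ H with (A = E₁ ∨ A = E₂) ∧ 1 < A.card, (A.card - 1) =
      (E₁.card - 1) + (E₂.card - 1) := by
    rw [← sum_pair (f := fun A : Finset X => A.card - 1) hne]
    refine sum_subset (fun S hS => ?_) fun S hS hS' => ?_
    · rcases (mem_filter.1 hS).2.1 with rfl | rfl <;> simp
    · have hSE : S = E₁ ∨ S = E₂ := by simpa using hS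
      have hSH : S ∈ H := by rcases hSE with rfl | rfl; exacts [hp.left_mem, hp.right_mem]
      simp only [mem_filter, hSH, hSE, true_and, not_lt] at hS'
      omega
  have hunion : (E₁ ∪ E₂).card - 1 = (E₁.card - 1) + (E₂.card - 1) + 1 := by
    rw [card_union_of_disjoint hp.disjoint]
    have := (hH.nonempty hp.left_mem).card_pos
    have := (hH.nonempty hp.right_mem).card_pos
    omega
  have hbind : ∑ A ∈ binding H E₁ E₂, (A.card - 1) =
      ∑ A ∈ H with ¬((A = E₁ ∨ A = E₂) ∧ 1 < A.card), (A.card - 1) + ((E₁ ∪ E₂).card - 1) := by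
    rw [binding, sum_union (disjoint_singleton_right.2 fun h => hp.union_notMem
      (mem_filter.1 h).1), sum_singleton]
  have hsplit := sum_filter_add_sum_filter_not H (fun A => (A = E₁ ∨ A = E₂) ∧ 1 < A.card)
    (fun A => A.card - 1)
  have h₁ := rankHP_add_card_sub_one hH.1
  have h₂ := rankHP_add_card_sub_one (hp.isHierarchy_binding hH).1
  omega


theorem subset_or_subset_of_ssubset_union (hH : IsHierarchy H) (hp : IsBindingPair H E₁ E₂)
    (hS : S ∈ H) (hSU : S ⊂ E₁ ∪ E₂) : S ⊆ E₁ ∨ S ⊆ E₂ := by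
  have below {E : Finset X} (hE : E = E₁ ∨ E = E₂) {x : X} (hxS : x ∈ S) (hxE : x ∈ E) :
      S ⊆ E := by
    have hEH : E ∈ H := by rcases hE with rfl | rfl; exacts [hp.left_mem, hp.right_mem]
    rcases hH.subset_or_subset_of_mem hS hEH hxS hxE with hSE | hES
    · exact hSE
    rcases eq_or_ne E S with rfl | hne
    · exact subset_rfl
    have hlt : E ⊂ S := ssubset_of_subset_of_ne hES hne
    exact absurd (hp.union_subset_of_ssubset S hS (by rcases hE with rfl | rfl <;> simp [hlt]))
      hSU.not_subset
  obtain ⟨x, hx⟩ := hH.nonempty hS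
  rcases mem_union.1 (hSU.subset hx) with h | h
  exacts [.inl (below (.inl rfl) hx h), .inr (below (.inr rfl) hx h)]

theorem leHP_binding_of_isHPMap (hH : IsHierarchy H) (hp : IsBindingPair H E₁ E₂)
    (hδ : IsHPMap H H' δ) (hD : D ∈ H') (h₁ : δ E₁ ⊆ D) (h₂ : δ E₂ ⊆ D)
    (habove : ∀ F ∈ H, E₁ ∪ E₂ ⊂ F → D ⊂ δ F) : LeHP (binding H E₁ E₂) H' := by
  have hUD : E₁ ∪ E₂ ⊆ D := union_subset ((hδ.2.2.1 _ hp.left_mem).trans h₁)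
    ((hδ.2.2.1 _ hp.right_mem).trans h₂)
  have old_mem {S : Finset X} (hS : S ∈ binding H E₁ E₂) (hSU : S ≠ E₁ ∪ E₂) :
      S ∈ H ∧ ¬((S = E₁ ∨ S = E₂) ∧ 1 < S.card) :=
    (mem_binding.1 hS).resolve_right hSU
  have hsingle (x : X) : ({x} : Finset X) ≠ E₁ ∪ E₂ := fun h => hp.union_notMem (h ▸ hH.2.1 x)
  refine ⟨fun S => if S = E₁ ∪ E₂ then D else δ S, fun S hS => ?_,
    fun x => by simp only [hsingle x, if_false, hδ.2.1 x], fun S hS => ?_,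
    fun S hS T hT hST => ?_⟩ <;> dsimp only
  · split_ifs with h
    exacts [hD, hδ.1 S (old_mem hS h).1]
  · split_ifs with h
    exacts [h ▸ hUD, hδ.2.2.1 S (old_mem hS h).1]
  · split_ifs with hSU hTU hTU
    · exact absurd (hSU.trans hTU.symm) hST.ne
    · exact habove T (old_mem hT hTU).1 (hSU ▸ hST)
    · obtain ⟨hSH, hSkept⟩ := old_mem hS hSU
      subst hTU
      have key {E : Finset X} (hE : E = E₁ ∨ E = E₂) (hEH : E ∈ H) (hδE : δ E ⊆ D)
          (hSE : S ⊆ E) : δ S ⊂ D := by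
        rcases eq_or_ne S E with rfl | hne
        · have hcard : S.card ≤ 1 := by simpa [hE] using hSkept
          obtain ⟨x, rfl⟩ := card_eq_one.1 (hcard.antisymm (hH.nonempty hSH).card_pos)
          rw [hδ.2.1 x]
          exact hST.trans_subset hUD
        · exact (hδ.2.2.2 S hSH E hEH (ssubset_of_subset_of_ne hSE hne)).trans_subset hδE
      rcases hp.subset_or_subset_of_ssubset_union hH hSH hST with h | h
      exacts [key (.inl rfl) hp.left_mem h₁ h, key (.inr rfl) hp.right_mem h₂ h]
    · exact hδ.2.2.2 S (old_mem hS hSU).1 T (old_mem hT hTU).1 hST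

end IsBindingPair

section MaximalSubclusters

variable {E₁ E₂ : Finset X}

theorem exists_two_maximal_ssubset (hH : IsHierarchy H) (hD : D.Nonempty) (hDH : D ∉ H) :
    ∃ E₁ E₂, E₁ ≠ E₂ ∧ Maximal (fun E => E ∈ H ∧ E ⊂ D) E₁ ∧
      Maximal (fun E => E ∈ H ∧ E ⊂ D) E₂ := by
  have hmax {x : X} (hx : x ∈ D) : ∃ E, x ∈ E ∧ Maximal (fun E => E ∈ H ∧ E ⊂ D) E := by
    have hxD : {x} ∈ H.filter (· ⊂ D) := mem_filter.2 ⟨hH.2.1 x,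
      ssubset_of_subset_of_ne (singleton_subset_iff.2 hx) fun h => hDH (h ▸ hH.2.1 x)⟩
    obtain ⟨E, hxE, hE⟩ := (H.filter (· ⊂ D)).exists_le_maximal hxD
    exact ⟨E, singleton_subset_iff.1 hxE, by simpa only [mem_filter] using hE⟩
  obtain ⟨x, hx⟩ := hD
  obtain ⟨E₁, -, hE₁⟩ := hmax hx
  obtain ⟨y, hyD, hyE₁⟩ := exists_of_ssubset hE₁.prop.2
  obtain ⟨E₂, hyE₂, hE₂⟩ := hmax hyD
  exact ⟨E₁, E₂, fun h => hyE₁ (h ▸ hyE₂), hE₁, hE₂⟩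

variable (hH : IsHierarchy H) (hDH : D ∉ H) (hcompat : ∀ F ∈ H, F ∩ D = ∅ ∨ F ⊆ D ∨ D ⊆ F)
include hH hDH hcompat

theorem ssubset_of_maximal_of_ssubset (hE : Maximal (fun E => E ∈ H ∧ E ⊂ D) E) (hF : F ∈ H)
    (hEF : E ⊂ F) : D ⊂ F := by
  rcases hcompat F hF with h | h | h
  · obtain ⟨x, hx⟩ := hH.nonempty hE.prop.1
    exact absurd (h ▸ mem_inter.2 ⟨hEF.subset hx, hE.prop.2.subset hx⟩) (notMem_empty x)
  · have hFD : F ⊂ D := ssubset_of_subset_of_ne h fun h => hDH (h ▸ hF)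
    exact absurd (hE.2 ⟨hF, hFD⟩ hEF.subset) hEF.not_subset
  · exact ssubset_of_subset_of_ne h fun h => hDH (h ▸ hF)

theorem isBindingPair_of_maximal (hne : E₁ ≠ E₂) (h₁ : Maximal (fun E => E ∈ H ∧ E ⊂ D) E₁)
    (h₂ : Maximal (fun E => E ∈ H ∧ E ⊂ D) E₂) : IsBindingPair H E₁ E₂ := by
  have hUD : E₁ ∪ E₂ ⊆ D := union_subset h₁.prop.2.subset h₂.prop.2.subset
  have habove : ∀ F ∈ H, E₁ ⊂ F ∨ E₂ ⊂ F → E₁ ∪ E₂ ⊆ F := by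
    rintro F hF (h | h)
    · exact hUD.trans (ssubset_of_maximal_of_ssubset hH hDH hcompat h₁ hF h).subset
    · exact hUD.trans (ssubset_of_maximal_of_ssubset hH hDH hcompat h₂ hF h).subset
  have hdisj : Disjoint E₁ E₂ := by
    rw [disjoint_iff_inter_eq_empty]
    rcases hH.2.2.2 E₁ h₁.prop.1 E₂ h₂.prop.1 with h | h | h
    · exact h
    · exact absurd (h.antisymm (h₁.2 h₂.prop h)) hne
    · exact absurd (h.antisymm (h₂.2 h₁.prop h)).symm hne
  refine ⟨h₁.prop.1, h₂.prop.1, hdisj, fun hU => ?_, habove⟩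
  obtain ⟨y, hy⟩ := hH.nonempty h₂.prop.1
  have hlt : E₁ ⊂ E₁ ∪ E₂ := ssubset_of_subset_of_ne subset_union_left fun h =>
    disjoint_left.1 hdisj (h ▸ mem_union_right E₁ hy) hy
  exact (ssubset_of_maximal_of_ssubset hH hDH hcompat h₁ hU hlt).not_subset hUD

end MaximalSubclusters

/-- `D` is taken maximal among the clusters of `H'` that are new or are the image of a cluster
moved by `δ`; maximality forces `δ` to fix every cluster whose image lies above `D`. -/
theorem IsHPMap.exists_compatible_cluster (hH : IsHierarchy H) (hH' : IsHierarchy H')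
    (hδ : IsHPMap H H' δ) (hne : H ≠ H') :
    ∃ D ∈ H', D ∉ H ∧ (∀ F ∈ H, F ∩ D = ∅ ∨ F ⊆ D ∨ D ⊆ F) ∧ ∀ E ∈ H, E ⊆ D → δ E ⊆ D := by
  set Z := (H' \ H) ∪ (H.filter fun A => δ A ≠ A).image δ
  have hZ : Z.Nonempty := by
    rw [nonempty_iff_ne_empty, Ne, union_eq_empty, sdiff_eq_empty_iff_subset, image_eq_empty,
      filter_eq_empty_iff]
    rintro ⟨hH'H, hfix⟩
    refine hne (Subset.antisymm (fun A hA => ?_) hH'H)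
    simpa [not_not.1 (hfix hA)] using hδ.1 A hA
  obtain ⟨D, hDZ, hDmax⟩ := Z.exists_maximal hZ
  have hDH' : D ∈ H' := by
    rcases mem_union.1 hDZ with h | h
    · exact (mem_sdiff.1 h).1
    · obtain ⟨A, hA, rfl⟩ := mem_image.1 h
      exact hδ.1 A (mem_filter.1 hA).1
  have hfix : ∀ F ∈ H, D ⊂ δ F → δ F = F := fun F hF hDF => by
    by_contra h
    exact hDF.not_subset (hDmax (mem_union_right _ (mem_image_of_mem δ (mem_filter.2 ⟨hF, h⟩)))
      hDF.subset)
  have hDH : D ∉ H := by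
    intro hDH
    obtain ⟨A, hA, rfl⟩ := mem_image.1 ((mem_union.1 hDZ).resolve_left fun h =>
      (mem_sdiff.1 h).2 hDH)
    obtain ⟨hAH, hAmoved⟩ := mem_filter.1 hA
    have hAδA : A ⊂ δ A := ssubset_of_subset_of_ne (hδ.2.2.1 A hAH) (Ne.symm hAmoved)
    have hlt := hδ.2.2.2 A hAH (δ A) hDH hAδA
    exact hlt.ne (hfix _ hDH hlt).symm
  refine ⟨D, hDH', hDH, fun F hF => ?_, fun E hE hED => ?_⟩
  · rcases hH'.2.2.2 (δ F) (hδ.1 F hF) D hDH' with h | h | h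
    · exact .inl (subset_empty.1 (h ▸ inter_subset_inter_right (hδ.2.2.1 F hF)))
    · exact .inr (.inl ((hδ.2.2.1 F hF).trans h))
    · rcases eq_or_ne D (δ F) with h' | h'
      · exact .inr (.inl (h' ▸ hδ.2.2.1 F hF))
      · exact .inr (.inr (hfix F hF (ssubset_of_subset_of_ne h h') ▸ h))
  · obtain ⟨x, hx⟩ := hH.nonempty hE
    rcases hH'.subset_or_subset_of_mem (hδ.1 E hE) hDH' (hδ.2.2.1 E hE hx) (hED hx) with h | h
    · exact h
    · rcases eq_or_ne D (δ E) with h' | h'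
      · exact h' ▸ subset_rfl
      · rw [hfix E hE (ssubset_of_subset_of_ne h h')]
        exact hED

theorem exists_isBindingPair_leHP (hH : IsHierarchy H) (hH' : IsHierarchy H') (h : LeHP H H')
    (hne : H ≠ H') : ∃ E₁ E₂, IsBindingPair H E₁ E₂ ∧ LeHP (binding H E₁ E₂) H' := by
  obtain ⟨δ, hδ⟩ := h
  obtain ⟨D, hDH', hDH, hcompat, hδD⟩ := hδ.exists_compatible_cluster hH hH' hne
  obtain ⟨E₁, E₂, hne₁₂, h₁, h₂⟩ := exists_two_maximal_ssubset hH (hH'.nonempty hDH') hDH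
  have hp := isBindingPair_of_maximal hH hDH hcompat hne₁₂ h₁ h₂
  refine ⟨E₁, E₂, hp, hp.leHP_binding_of_isHPMap hH hδ hDH' (hδD _ h₁.prop.1 h₁.prop.2.subset)
    (hδD _ h₂.prop.1 h₂.prop.2.subset) fun F hF hUF => ?_⟩
  exact (ssubset_of_maximal_of_ssubset hH hDH hcompat h₁ hF
    (subset_union_left.trans_ssubset hUF)).trans_subset (hδ.2.2.1 F hF)

theorem rankHP_lt_of_leHP (hH : IsHierarchy H) (hH' : IsHierarchy H') (h : LeHP H H')
    (hne : H ≠ H') : rankHP H < rankHP H' := by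
  obtain ⟨E₁, E₂, hp, hle⟩ := exists_isBindingPair_leHP hH hH' h hne
  have := rankHP_le_of_leHP (hp.isHierarchy_binding hH) hle
  rw [hp.rankHP_binding hH] at this
  omega

theorem CoversHP.rankHP_eq (hH : IsHierarchy H) (hH' : IsHierarchy H') (h : CoversHP H H') :
    rankHP H' = rankHP H + 1 := by
  obtain ⟨hle, hne, hcov⟩ := h
  obtain ⟨E₁, E₂, hp, hle'⟩ := exists_isBindingPair_leHP hH hH' hle hne
  rcases hcov _ (hp.isHierarchy_binding hH) (hp.leHP_binding hH) hle' with h | h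
  · have := hp.rankHP_binding hH
    rw [h] at this
    omega
  · rw [← h, hp.rankHP_binding hH]

theorem coversHP_of_rankHP_eq (hH : IsHierarchy H) (hH' : IsHierarchy H') (h : LeHP H H')
    (hr : rankHP H' = rankHP H + 1) : CoversHP H H' := by
  refine ⟨h, fun h => by simp [h] at hr, fun K hK hHK hKH' => ?_⟩
  by_contra! hne
  have h₁ := rankHP_lt_of_leHP hH hK hHK (Ne.symm hne.1)
  have h₂ := rankHP_lt_of_leHP hK hH' hKH' hne.2
  omega

theorem HasseAdj.symm {K : Finset (Finset X)} (h : HasseAdj H K) : HasseAdj K H :=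
  ⟨h.2.1, h.1, h.2.2.symm⟩

theorem HasseAdj.rankHP_eq {K : Finset (Finset X)} (h : HasseAdj H K) :
    (LeHP H K ∧ rankHP K = rankHP H + 1) ∨ (LeHP K H ∧ rankHP H = rankHP K + 1) := by
  obtain ⟨hH, hK, hc | hc⟩ := h
  exacts [.inl ⟨hc.1, hc.rankHP_eq hH hK⟩, .inr ⟨hc.1, hc.rankHP_eq hK hH⟩]

namespace HasPathHP

variable {K : Finset (Finset X)} {m k : ℕ}

theorem refl (H : Finset (Finset X)) : HasPathHP H H 0 :=
  ⟨fun _ => H, rfl, rfl, fun _ h => absurd h (Nat.not_lt_zero _)⟩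

theorem cons (h : HasseAdj H K) (hp : HasPathHP K H' m) : HasPathHP H H' (m + 1) := by
  obtain ⟨c, hc₀, hcm, hadj⟩ := hp
  refine ⟨fun | 0 => H | i + 1 => c i, rfl, hcm, fun i hi => ?_⟩
  rcases i with _ | i
  · exact show HasseAdj H (c 0) from hc₀ ▸ h
  · exact hadj i (by omega)

theorem exists_cons (hp : HasPathHP H H' (m + 1)) : ∃ K, HasseAdj H K ∧ HasPathHP K H' m := by
  obtain ⟨c, hc₀, hcm, hadj⟩ := hp
  exact ⟨c 1, hc₀ ▸ hadj 0 (by omega), fun i => c (i + 1), rfl, hcm,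
    fun i hi => hadj (i + 1) (by omega)⟩

theorem trans (hp : HasPathHP H K m) (hp' : HasPathHP K H' k) : HasPathHP H H' (m + k) := by
  induction m generalizing H with
  | zero =>
    obtain ⟨c, hc₀, hcm, -⟩ := hp
    rw [← hc₀, hcm, zero_add]
    exact hp'
  | succ m ih =>
    obtain ⟨K', hadj, hp⟩ := hp.exists_cons
    rw [add_right_comm]
    exact (ih hp).cons hadj

theorem symm (hp : HasPathHP H H' m) : HasPathHP H' H m := by
  obtain ⟨c, hc₀, hcm, hadj⟩ := hp
  refine ⟨fun i => c (m - i), by simpa using hcm, by simpa using hc₀, fun i hi => ?_⟩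
  have := (hadj (m - (i + 1)) (by omega)).symm
  rwa [show m - (i + 1) + 1 = m - i by omega] at this

theorem rankHP_le (hp : HasPathHP H H' k) : rankHP H ≤ rankHP H' + k := by
  induction k generalizing H with
  | zero =>
    obtain ⟨c, hc₀, hcm, -⟩ := hp
    rw [← hc₀, hcm, add_zero]
  | succ k ih =>
    obtain ⟨K, hadj, hp⟩ := hp.exists_cons
    have := ih hp
    rcases hadj.rankHP_eq with ⟨-, h⟩ | ⟨-, h⟩ <;> omega

/-- A walk that is too short to ever climb must descend at every step. -/
theorem leHP_of_length_lt (hp : HasPathHP H H' k) (hk : k + rankHP H' < rankHP H + 2) :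
    LeHP H' H := by
  induction k generalizing H with
  | zero =>
    obtain ⟨c, hc₀, hcm, -⟩ := hp
    rw [← hc₀, hcm]
    exact .of_subset subset_rfl
  | succ k ih =>
    obtain ⟨K, hadj, hp⟩ := hp.exists_cons
    rcases hadj.rankHP_eq with ⟨-, h⟩ | ⟨hKH, h⟩
    · have := hp.rankHP_le
      omega
    · exact (ih hp (by omega)).trans hKH

end HasPathHP

theorem LeHP.hasPathHP (hH : IsHierarchy H) (hH' : IsHierarchy H') (h : LeHP H H') :
    HasPathHP H H' (rankHP H' - rankHP H) := by
  generalize hd : rankHP H' - rankHP H = d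
  induction d using Nat.strong_induction_on generalizing H with
  | _ d ih =>
    rcases eq_or_ne H H' with rfl | hne
    · rw [← hd, Nat.sub_self]
      exact .refl H
    obtain ⟨E₁, E₂, hp, hle⟩ := exists_isBindingPair_leHP hH hH' h hne
    have hK := hp.isHierarchy_binding hH
    have hrank := hp.rankHP_binding hH
    have hKH' := rankHP_le_of_leHP hK hle
    have hadj : HasseAdj H (binding H E₁ E₂) :=
      ⟨hH, hK, .inl (coversHP_of_rankHP_eq hH hK (hp.leHP_binding hH) hrank)⟩
    have := (ih _ (by omega) hK hle rfl).cons hadj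
    rwa [show rankHP H' - rankHP (binding H E₁ E₂) + 1 = d by omega] at this

def starHierarchy : Finset (Finset X) := insert univ (univ.image singleton)

theorem starHierarchy_subset (hH : IsHierarchy H) : starHierarchy ⊆ H := by
  intro A hA
  rcases mem_insert.1 hA with rfl | hA
  · exact hH.1
  · obtain ⟨x, -, rfl⟩ := mem_image.1 hA
    exact hH.2.1 x

theorem IsHierarchy.isHierarchy_starHierarchy (hH : IsHierarchy H) :
    IsHierarchy (starHierarchy (X := X)) := by
  refine ⟨mem_insert_self _ _, fun x => mem_insert_of_mem (mem_image_of_mem _ (mem_univ x)),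
    fun A hA => hH.nonempty (starHierarchy_subset hH hA), fun A hA B hB => ?_⟩
  rcases mem_insert.1 hA with rfl | hA
  · exact .inr (.inr (subset_univ B))
  rcases mem_insert.1 hB with rfl | hB
  · exact .inr (.inl (subset_univ A))
  obtain ⟨x, -, rfl⟩ := mem_image.1 hA
  obtain ⟨y, -, rfl⟩ := mem_image.1 hB
  rcases eq_or_ne x y with rfl | hxy
  · exact .inr (.inl subset_rfl)
  · exact .inl (by simp [hxy])

theorem rankHP_starHierarchy : rankHP (starHierarchy (X := X)) = 0 := by
  refine sum_eq_zero fun A hA => ?_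
  obtain ⟨hA, hAu, -⟩ := mem_properClusters.1 hA
  obtain ⟨x, -, rfl⟩ := mem_image.1 ((mem_insert.1 hA).resolve_left hAu)
  simp

theorem hasPathHP_starHierarchy (hH : IsHierarchy H) :
    HasPathHP starHierarchy H (rankHP H) := by
  simpa [rankHP_starHierarchy] using
    (LeHP.of_subset (starHierarchy_subset hH)).hasPathHP hH.isHierarchy_starHierarchy hH

theorem two_mul_sub_one_add_le {m u : ℕ} (hm : 2 ≤ m) (hmu : m < u) :
    2 * (m - 1) + (m - 1) * (m - 2) + (u - m + 1 - 1) * (u - m + 1 - 2) ≤ (u - 1) * (u - 2) := by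
  obtain ⟨p, rfl⟩ := Nat.exists_eq_add_of_le hm
  obtain ⟨q, rfl⟩ := Nat.exists_eq_add_of_lt hmu
  rw [show 2 + p - 1 = p + 1 by omega, show 2 + p - 2 = p by omega,
    show 2 + p + q + 1 - (2 + p) + 1 - 1 = q + 1 by omega,
    show 2 + p + q + 1 - (2 + p) + 1 - 2 = q by omega,
    show 2 + p + q + 1 - 1 = p + q + 2 by omega, show 2 + p + q + 1 - 2 = p + q + 1 by omega]
  nlinarith

/-- Peel off a maximal member `M`: the members inside `M` live in `M`, the others in `U \ M`
with `M` contracted to a single point `y`. -/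
theorem two_mul_sum_card_sub_one_le {α : Type*} [DecidableEq α] (F : Finset (Finset α))
    {U : Finset α} (hlam : ∀ A ∈ F, ∀ B ∈ F, A ∩ B = ∅ ∨ A ⊆ B ∨ B ⊆ A)
    (hcard : ∀ A ∈ F, 2 ≤ A.card) (hU : ∀ A ∈ F, A ⊂ U) :
    2 * ∑ A ∈ F, (A.card - 1) ≤ (U.card - 1) * (U.card - 2) := by
  induction F using Finset.strongInduction generalizing U with
  | _ F ih =>
  rcases F.eq_empty_or_nonempty with rfl | hF
  · simp
  obtain ⟨M, hM⟩ := F.exists_maximal hF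
  have hMF := hM.prop
  obtain ⟨y, hy⟩ := card_pos.1 (by have := hcard M hMF; omega : 0 < M.card)
  have hsub {G : Finset (Finset α)} (hG : G ⊆ F.erase M) : G ⊂ F :=
    hG.trans_ssubset (erase_ssubset hMF)
  have hmem {G : Finset (Finset α)} (hG : G ⊆ F.erase M) {A : Finset α} (hA : A ∈ G) : A ∈ F :=
    mem_of_mem_erase (hG hA)
  have hin : (F.erase M).filter (· ⊆ M) ⊆ F.erase M := filter_subset _ _
  have hout : (F.erase M).filter (¬ · ⊆ M) ⊆ F.erase M := filter_subset _ _
  have hinner := ih _ (hsub hin) (U := M)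
    (fun A hA B hB => hlam A (hmem hin hA) B (hmem hin hB)) (fun A hA => hcard A (hmem hin hA))
    (fun A hA => ssubset_of_subset_of_ne (mem_filter.1 hA).2 (ne_of_mem_erase (hin hA)))
  have hdisj {A : Finset α} (hA : A ∈ (F.erase M).filter (¬ · ⊆ M)) : A ⊆ U \ M := by
    have hAM := (mem_filter.1 hA).2
    rcases hlam A (hmem hout hA) M hMF with h | h | h
    · exact subset_sdiff.2 ⟨(hU A (hmem hout hA)).subset, disjoint_iff_inter_eq_empty.2 h⟩
    · exact absurd h hAM
    · exact absurd (hM.2 (hmem hout hA) h) hAM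
  have houter := ih _ (hsub hout) (U := insert y (U \ M))
    (fun A hA B hB => hlam A (hmem hout hA) B (hmem hout hB)) (fun A hA => hcard A (hmem hout hA))
    (fun A hA => (hdisj hA).trans_ssubset (ssubset_insert fun h => (mem_sdiff.1 h).2 hy))
  have hMU := card_lt_card (hU M hMF)
  have hcardU : (insert y (U \ M)).card = U.card - M.card + 1 := by
    rw [card_insert_of_notMem fun h => (mem_sdiff.1 h).2 hy,
      card_sdiff_of_subset (hU M hMF).subset]
  rw [hcardU] at houter
  rw [← add_sum_erase F _ hMF, ← sum_filter_add_sum_filter_not (F.erase M) (· ⊆ M)]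
  have := two_mul_sub_one_add_le (hcard M hMF) hMU
  linarith

theorem IsHierarchy.two_mul_rankHP_le (hH : IsHierarchy H) :
    2 * rankHP H ≤ (Fintype.card X - 1) * (Fintype.card X - 2) := by
  rw [← card_univ]
  exact two_mul_sum_card_sub_one_le _
    (fun A hA B hB => hH.2.2.2 A (properClusters_subset hA) B (properClusters_subset hB))
    (fun A hA => (mem_properClusters.1 hA).2.2)
    (fun A hA => ssubset_univ_iff.2 (mem_properClusters.1 hA).2.1)

theorem two_mul_sum_Icc_two_sub_one (N : ℕ) : 2 * ∑ k ∈ Icc 2 N, (k - 1) = N * (N - 1) := by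
  induction N with
  | zero => simp
  | succ N ih =>
    obtain _ | M := N
    · simp
    rw [sum_Icc_succ_top (by omega), mul_add, ih]
    simp only [Nat.add_sub_cancel]
    ring

namespace IsCaterpillar

theorem two_mul_rankHP (hC : IsCaterpillar H) :
    2 * rankHP H = (Fintype.card X - 1) * (Fintype.card X - 2) := by
  obtain ⟨-, c, hcard, -, hP⟩ := hC
  have hc {k : ℕ} (hk : k ∈ Icc 2 (Fintype.card X - 1)) : (c k).card = k :=
    hcard k (mem_Icc.1 hk).1 (mem_Icc.1 hk).2
  rw [rankHP, hP, sum_image fun k hk l hl hkl => by rw [← hc hk, ← hc hl, hkl],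
    sum_congr rfl fun k hk => by rw [hc hk], two_mul_sum_Icc_two_sub_one]
  rfl

theorem notMem_of_mem_properClusters {a : X} (hC : IsCaterpillar H) (ha : univ.erase a ∈ H)
    (hA : A ∈ properClusters H) : a ∉ A := by
  obtain ⟨-, c, hcard, hchain, hP⟩ := hC
  rw [hP] at hA
  obtain ⟨k, hk, rfl⟩ := mem_image.1 hA
  obtain ⟨hk₂, hkn⟩ := mem_Icc.1 hk
  have htop : univ.erase a ∈ properClusters H := mem_properClusters.2 ⟨ha,
    (erase_ssubset (mem_univ a)).ne, by rw [card_erase_of_mem (mem_univ a), card_univ]; omega⟩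
  rw [hP] at htop
  obtain ⟨j, hj, hja⟩ := mem_image.1 htop
  obtain ⟨hj₂, hjn⟩ := mem_Icc.1 hj
  have hjtop : j = Fintype.card X - 1 := by
    have := hcard j hj₂ hjn
    rw [hja, card_erase_of_mem (mem_univ a), card_univ] at this
    omega
  have hkj : c k ⊆ c j := by
    rcases hkn.lt_or_eq with h | h
    · exact (hchain k j hk₂ (hjtop ▸ h) hjn).subset
    · rw [h, hjtop]
  rw [hja] at hkj
  exact fun h => notMem_erase a univ (hkj h)

end IsCaterpillar

theorem not_leHP_of_mem_properClusters (hu : univ ∈ H) (hA : A ∈ properClusters H)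
    (h : ∀ B ∈ properClusters H', ¬A ⊆ B) : ¬LeHP H H' := fun ⟨_, hδ⟩ =>
  h _ (hδ.mem_properClusters hu hA) (hδ.2.2.1 A (properClusters_subset hA))

theorem diameter_bounds_general (a b : X) (hab : a ≠ b)
    (C T : Finset (Finset X)) (hC : IsCaterpillar C) (hCa : Finset.univ.erase a ∈ C)
    (hT : IsHierarchy T) (hTP : properClusters T = {({a, b} : Finset X)}) :
    DistHP C T ((Fintype.card X - 1) * (Fintype.card X - 2) / 2 + 1) ∧
    ∀ T₁ T₂ : Finset (Finset X), IsHierarchy T₁ → IsHierarchy T₂ →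
      ∀ d : ℕ, DistHP T₁ T₂ d → d ≤ (Fintype.card X - 1) * (Fintype.card X - 2) := by
  have hrankC := hC.two_mul_rankHP
  have hrankT : rankHP T = 1 := by rw [rankHP, hTP, sum_singleton, card_pair hab]
  have hTC : ¬LeHP T C := not_leHP_of_mem_properClusters hT.1 (hTP ▸ mem_singleton_self _)
    fun B hB hsub => hC.notMem_of_mem_properClusters hCa hB (hsub (mem_insert_self a {b}))
  refine ⟨⟨?_, fun k hk => ?_⟩, fun T₁ T₂ h₁ h₂ d hd => ?_⟩
  · convert (hasPathHP_starHierarchy hC.1).symm.trans (hasPathHP_starHierarchy hT) using 1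
    omega
  · by_contra! hlt
    exact hTC (hk.leHP_of_length_lt (by omega))
  · have := hd.2 _ ((hasPathHP_starHierarchy h₁).symm.trans (hasPathHP_starHierarchy h₂))
    have := h₁.two_mul_rankHP_le
    have := h₂.two_mul_rankHP_le
    omega

/-- the diameter `Δ` of `RP(X)` under `d_HP` satisfies
`(n-1)(n-2)/2 + 1 ≤ Δ ≤ (n-1)(n-2)`; the lower bound is witnessed by a caterpillar `C`
with inclusion-maximal proper cluster `X \ {a}` and a tree `T` whose only proper cluster
is `{a, b}`. -/
theorem diameter_bounds (hn : 4 ≤ Fintype.card X) (a b : X) (hab : a ≠ b)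
    (C T : Finset (Finset X)) (hC : IsCaterpillar C) (hCa : Finset.univ.erase a ∈ C)
    (hT : IsHierarchy T) (hTP : properClusters T = {({a, b} : Finset X)}) :
    DistHP C T ((Fintype.card X - 1) * (Fintype.card X - 2) / 2 + 1) ∧
    ∀ T₁ T₂ : Finset (Finset X), IsHierarchy T₁ → IsHierarchy T₂ →
      ∀ d : ℕ, DistHP T₁ T₂ d → d ≤ (Fintype.card X - 1) * (Fintype.card X - 2) :=
  diameter_bounds_general a b hab C T hC hCa hT hTP
end

section
/- Let T, T' be rooted phylogenetic trees on X with T ≤_HP T' and d_HP(T, T') = 1 (T' covers T). Then the symmetric difference H(T) Δ H(T') contains at most three clusters; specifically H(T) \ H(T') ⊆ {A, B} and H(T') \ H(T) = {A ∪ B}, where T' is the binding of T at A ∪ B for some pair A, B of distinct inclusion-maximal subclusters of a common cluster of H(T). -/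
open Finset

variable {X : Type*} [DecidableEq X] [Fintype X]

lemma ssub_trans {s t u : Finset X} (h1 : s ⊂ t) (h2 : t ⊆ u) : s ⊂ u := by
  rw [Finset.ssubset_def] at *
  exact ⟨h1.1.trans h2, fun h => h1.2 (h2.trans h)⟩

lemma sub_ssub_trans {s t u : Finset X} (h1 : s ⊆ t) (h2 : t ⊂ u) : s ⊂ u := by
  rw [Finset.ssubset_def] at *
  exact ⟨h1.trans h2.1, fun h => h2.2 (h.trans h1)⟩

lemma hier_nested {T : Finset (Finset X)} (hT : IsHierarchy T)
    {A B : Finset X} (hA : A ∈ T) (hB : B ∈ T) (h : (A ∩ B).Nonempty) :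
    A ⊆ B ∨ B ⊆ A := by
  rcases hT.2.2.2 A hA B hB with h0 | h0 | h0
  · rw [h0] at h; exact absurd h (by simp)
  · exact Or.inl h0
  · exact Or.inr h0

lemma hier_ne {T : Finset (Finset X)} (hT : IsHierarchy T) {A : Finset X}
    (hA : A ∈ T) : A.Nonempty := hT.2.2.1 A hA

lemma exists_min_sup {T : Finset (Finset X)} (hT : IsHierarchy T)
    {C : Finset X} (hCne : C.Nonempty) (hCu : C ≠ Finset.univ) :
    ∃ D ∈ T, C ⊂ D ∧ ∀ E ∈ T, C ⊂ E → D ⊆ E := by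
  classical
  have hu : Finset.univ ∈ T.filter (fun E => C ⊂ E) := by
    simp only [Finset.mem_filter]
    exact ⟨hT.1, Finset.ssubset_univ_iff.mpr hCu⟩
  obtain ⟨D, hD, hmin⟩ := Finset.exists_min_image _ Finset.card ⟨_, hu⟩
  rw [Finset.mem_filter] at hD
  refine ⟨D, hD.1, hD.2, ?_⟩
  intro E hE hCE
  have hE' : E ∈ T.filter (fun E => C ⊂ E) := by
    simp only [Finset.mem_filter]; exact ⟨hE, hCE⟩
  have hcard := hmin E hE'
  have hnonempty : (D ∩ E).Nonempty :=
    hCne.mono (Finset.subset_inter hD.2.subset hCE.subset)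
  rcases hier_nested hT hD.1 hE hnonempty with h | h
  · exact h
  · exact (Finset.eq_of_subset_of_card_le h hcard).ge

lemma exists_max_sub {T : Finset (Finset X)} (hT : IsHierarchy T)
    {C : Finset X} {x : X} (hx : x ∈ C) (hne : ({x} : Finset X) ≠ C) :
    ∃ A ∈ T, x ∈ A ∧ A ⊂ C ∧ ∀ E ∈ T, A ⊂ E → ¬ E ⊂ C := by
  classical
  have hs : ({x} : Finset X) ∈ T.filter (fun E => x ∈ E ∧ E ⊂ C) := by
    simp only [Finset.mem_filter]
    exact ⟨hT.2.1 x, Finset.mem_singleton_self x,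
      Finset.ssubset_iff_subset_ne.mpr ⟨Finset.singleton_subset_iff.mpr hx, hne⟩⟩
  obtain ⟨A, hA, hmax⟩ := Finset.exists_max_image _ Finset.card ⟨_, hs⟩
  rw [Finset.mem_filter] at hA
  refine ⟨A, hA.1, hA.2.1, hA.2.2, ?_⟩
  intro E hE hAE hEC
  have hmem : E ∈ T.filter (fun E => x ∈ E ∧ E ⊂ C) := by
    simp only [Finset.mem_filter]
    exact ⟨hE, hAE.subset hA.2.1, hEC⟩
  exact absurd (hmax E hmem) (Finset.card_lt_card hAE).not_ge

lemma maxsub_parent {T : Finset (Finset X)} (hT : IsHierarchy T) {A D : Finset X}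
    (hA : IsMaxSub T A D) : ∀ E ∈ T, A ⊂ E → D ⊆ E := by
  intro E hE hAE
  have hAne := hier_ne hT hA.1
  have hnonempty : (E ∩ D).Nonempty :=
    hAne.mono (Finset.subset_inter hAE.subset hA.2.2.1.subset)
  rcases hier_nested hT hE hA.2.1 hnonempty with h | h
  · rcases eq_or_ne E D with rfl | hne
    · exact Finset.Subset.refl _
    · exact absurd ⟨hAE, Finset.ssubset_iff_subset_ne.mpr ⟨h, hne⟩⟩ (hA.2.2.2 E hE)
  · exact h

lemma maxsub_disj {T : Finset (Finset X)} (hT : IsHierarchy T) {A B D : Finset X}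
    (hA : IsMaxSub T A D) (hB : IsMaxSub T B D) (hAB : A ≠ B) : A ∩ B = ∅ := by
  by_contra h
  rcases hier_nested hT hA.1 hB.1 (Finset.nonempty_iff_ne_empty.mpr h) with h0 | h0
  · exact hA.2.2.2 B hB.1 ⟨Finset.ssubset_iff_subset_ne.mpr ⟨h0, hAB⟩, hB.2.2.1⟩
  · exact hB.2.2.2 A hA.1 ⟨Finset.ssubset_iff_subset_ne.mpr ⟨h0, hAB.symm⟩, hA.2.2.1⟩

lemma union_notMem {T : Finset (Finset X)} (hT : IsHierarchy T) {A B D : Finset X}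
    (hA : IsMaxSub T A D) (hB : IsMaxSub T B D) (hAB : A ≠ B) (hUD : A ∪ B ≠ D) :
    A ∪ B ∉ T := by
  intro hmem
  have hd := maxsub_disj hT hA hB hAB
  have h1 : A ⊂ A ∪ B := by
    refine Finset.ssubset_iff_subset_ne.mpr ⟨Finset.subset_union_left, ?_⟩
    intro h
    obtain ⟨b, hb⟩ := hier_ne hT hB.1
    have hbA : b ∈ A := by rw [h]; exact Finset.mem_union_right _ hb
    have : b ∈ A ∩ B := Finset.mem_inter.mpr ⟨hbA, hb⟩
    simp [hd] at this
  have h2 : A ∪ B ⊂ D := Finset.ssubset_iff_subset_ne.mpr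
    ⟨Finset.union_subset hA.2.2.1.subset hB.2.2.1.subset, hUD⟩
  exact hA.2.2.2 _ hmem ⟨h1, h2⟩

lemma sub_union {T : Finset (Finset X)} (hT : IsHierarchy T) {A B D : Finset X}
    (hA : IsMaxSub T A D) (hB : IsMaxSub T B D) (hAB : A ≠ B) :
    ∀ E ∈ T, E ⊆ A ∪ B → E ⊆ A ∨ E ⊆ B ∨ E = A ∪ B := by
  intro E hE hEAB
  have hd := maxsub_disj hT hA hB hAB
  by_cases h1 : (E ∩ A).Nonempty
  · rcases hier_nested hT hE hA.1 h1 with h | h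
    · exact Or.inl h
    · by_cases h2 : (E ∩ B).Nonempty
      · rcases hier_nested hT hE hB.1 h2 with h' | h'
        · obtain ⟨a, ha⟩ := hier_ne hT hA.1
          have : a ∈ A ∩ B := Finset.mem_inter.mpr ⟨ha, h' (h ha)⟩
          simp [hd] at this
        · exact Or.inr (Or.inr (Finset.Subset.antisymm hEAB (Finset.union_subset h h')))
      · refine Or.inl fun y hy => ?_
        rcases Finset.mem_union.mp (hEAB hy) with h' | h'
        · exact h'
        · exact absurd ⟨y, Finset.mem_inter.mpr ⟨hy, h'⟩⟩ h2
  · refine Or.inr (Or.inl fun y hy => ?_)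
    rcases Finset.mem_union.mp (hEAB hy) with h' | h'
    · exact absurd ⟨y, Finset.mem_inter.mpr ⟨hy, h'⟩⟩ h1
    · exact h'

lemma mem_binding_s17 {T : Finset (Finset X)} {A B C : Finset X} :
    C ∈ binding T A B ↔ (C ∈ T ∧ ¬((C = A ∨ C = B) ∧ 1 < C.card)) ∨ C = A ∪ B := by
  unfold binding
  rw [Finset.mem_union, Finset.mem_filter, Finset.mem_singleton]

lemma compat_union {T : Finset (Finset X)} (hT : IsHierarchy T) {A B D : Finset X}
    (hA : IsMaxSub T A D) (hB : IsMaxSub T B D) (hAB : A ≠ B) :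
    ∀ E ∈ T, E ∩ (A ∪ B) = ∅ ∨ E ⊆ A ∪ B ∨ A ∪ B ⊆ E := by
  intro E hE
  have hDsub : A ∪ B ⊆ D := Finset.union_subset hA.2.2.1.subset hB.2.2.1.subset
  by_cases h1 : (E ∩ A).Nonempty
  · rcases hier_nested hT hE hA.1 h1 with h | h
    · exact Or.inr (Or.inl (h.trans Finset.subset_union_left))
    · rcases eq_or_ne A E with rfl | hne
      · exact Or.inr (Or.inl Finset.subset_union_left)
      · have hDE := maxsub_parent hT hA E hE (Finset.ssubset_iff_subset_ne.mpr ⟨h, hne⟩)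
        exact Or.inr (Or.inr (hDsub.trans hDE))
  · by_cases h2 : (E ∩ B).Nonempty
    · rcases hier_nested hT hE hB.1 h2 with h | h
      · exact Or.inr (Or.inl (h.trans Finset.subset_union_right))
      · rcases eq_or_ne B E with rfl | hne
        · exact Or.inr (Or.inl Finset.subset_union_right)
        · have hDE := maxsub_parent hT hB E hE (Finset.ssubset_iff_subset_ne.mpr ⟨h, hne⟩)
          exact Or.inr (Or.inr (hDsub.trans hDE))
    · left
      rw [Finset.eq_empty_iff_forall_notMem]
      intro y hy
      rw [Finset.mem_inter, Finset.mem_union] at hy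
      rcases hy.2 with h | h
      · exact h1 ⟨y, Finset.mem_inter.mpr ⟨hy.1, h⟩⟩
      · exact h2 ⟨y, Finset.mem_inter.mpr ⟨hy.1, h⟩⟩

lemma binding_hier {T : Finset (Finset X)} (hT : IsHierarchy T) {A B D : Finset X}
    (hA : IsMaxSub T A D) (hB : IsMaxSub T B D) (hAB : A ≠ B) (hUD : A ∪ B ≠ D) :
    IsHierarchy (binding T A B) := by
  have hne : ∀ {A₀ : Finset X}, IsMaxSub T A₀ D → A₀ ≠ Finset.univ := by
    intro A₀ hA₀ h
    subst h
    exact ssubset_irrefl _ (ssub_trans hA₀.2.2.1 (Finset.subset_univ D))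
  refine ⟨?_, ?_, ?_, ?_⟩
  · rw [mem_binding_s17]
    refine Or.inl ⟨hT.1, ?_⟩
    rintro ⟨h | h, -⟩
    · exact hne hA h.symm
    · exact hne hB h.symm
  · intro x
    rw [mem_binding_s17]
    refine Or.inl ⟨hT.2.1 x, ?_⟩
    rintro ⟨-, h⟩
    simp at h
  · intro C hC
    rcases mem_binding_s17.mp hC with ⟨hCT, -⟩ | rfl
    · exact hier_ne hT hCT
    · obtain ⟨a, ha⟩ := hier_ne hT hA.1
      exact ⟨a, Finset.mem_union_left _ ha⟩
  · intro E hE F hF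
    rcases mem_binding_s17.mp hE with ⟨hET, -⟩ | rfl <;>
      rcases mem_binding_s17.mp hF with ⟨hFT, -⟩ | rfl
    · exact hT.2.2.2 E hET F hFT
    · exact compat_union hT hA hB hAB E hET
    · rcases compat_union hT hA hB hAB F hFT with h | h | h
      · exact Or.inl (by rw [Finset.inter_comm]; exact h)
      · exact Or.inr (Or.inr h)
      · exact Or.inr (Or.inl h)
    · exact Or.inr (Or.inl (Finset.Subset.refl _))

lemma le_binding_left {T : Finset (Finset X)} (hT : IsHierarchy T) {A B D : Finset X}
    (hA : IsMaxSub T A D) (hB : IsMaxSub T B D) (hAB : A ≠ B) (hUD : A ∪ B ≠ D) :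
    LeHP T (binding T A B) := by
  classical
  have hd := maxsub_disj hT hA hB hAB
  have hdisj : ∀ y, y ∈ A → y ∈ B → False := by
    intro y h1 h2
    have : y ∈ A ∩ B := Finset.mem_inter.mpr ⟨h1, h2⟩
    simp [hd] at this
  have hUD' : A ∪ B ⊂ D := Finset.ssubset_iff_subset_ne.mpr
    ⟨Finset.union_subset hA.2.2.1.subset hB.2.2.1.subset, hUD⟩
  refine ⟨fun C => if (C = A ∨ C = B) ∧ 1 < C.card then A ∪ B else C, ?_, ?_, ?_, ?_⟩
  · intro C hC
    dsimp only
    by_cases h : (C = A ∨ C = B) ∧ 1 < C.card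
    · rw [if_pos h, mem_binding_s17]; exact Or.inr rfl
    · rw [if_neg h, mem_binding_s17]; exact Or.inl ⟨hC, h⟩
  · intro x
    dsimp only
    rw [if_neg]
    rintro ⟨-, h⟩
    simp at h
  · intro C hC
    dsimp only
    by_cases h : (C = A ∨ C = B) ∧ 1 < C.card
    · rw [if_pos h]
      rcases h.1 with rfl | rfl
      exacts [Finset.subset_union_left, Finset.subset_union_right]
    · rw [if_neg h]
  · intro C1 h1 C2 h2 h12
    dsimp only
    by_cases ha : (C1 = A ∨ C1 = B) ∧ 1 < C1.card <;>
      by_cases hb : (C2 = A ∨ C2 = B) ∧ 1 < C2.card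
    · exfalso
      obtain ⟨a, haA⟩ := hier_ne hT hA.1
      obtain ⟨b, hbB⟩ := hier_ne hT hB.1
      rcases ha.1 with rfl | rfl <;> rcases hb.1 with rfl | rfl
      · exact ssubset_irrefl _ h12
      · exact hdisj a haA (h12.subset haA)
      · exact hdisj b (h12.subset hbB) hbB
      · exact ssubset_irrefl _ h12
    · rw [if_pos ha, if_neg hb]
      rcases ha.1 with rfl | rfl
      · exact ssub_trans hUD' (maxsub_parent hT hA C2 h2 h12)
      · exact ssub_trans hUD' (maxsub_parent hT hB C2 h2 h12)
    · rw [if_neg ha, if_pos hb]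
      rcases hb.1 with rfl | rfl
      · exact ssub_trans h12 Finset.subset_union_left
      · exact ssub_trans h12 Finset.subset_union_right
    · rw [if_neg ha, if_neg hb]; exact h12

lemma le_binding_right {T T' : Finset (Finset X)} {δ : Finset X → Finset X}
    (hT : IsHierarchy T) (hδ : IsHPMap T T' δ)
    {A B D V : Finset X}
    (hA : IsMaxSub T A D) (hB : IsMaxSub T B D) (hAB : A ≠ B) (hUD : A ∪ B ≠ D)
    (hV : V ∈ T') (hABV : A ∪ B ⊆ V)
    (hAV : ∀ C ∈ T, C ⊂ A → δ C ⊂ V) (hBV : ∀ C ∈ T, C ⊂ B → δ C ⊂ V)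
    (hVD : V ⊂ δ D) : LeHP (binding T A B) T' := by
  classical
  have hd := maxsub_disj hT hA hB hAB
  have hUmem := union_notMem hT hA hB hAB hUD
  obtain ⟨a0, ha0⟩ := hier_ne hT hA.1
  obtain ⟨b0, hb0⟩ := hier_ne hT hB.1
  have hdisj : ∀ y, y ∈ A → y ∈ B → False := by
    intro y h1 h2
    have : y ∈ A ∩ B := Finset.mem_inter.mpr ⟨h1, h2⟩
    simp [hd] at this
  have hAneV : A ≠ V := by
    intro h
    exact hdisj b0 (by rw [h]; exact hABV (Finset.mem_union_right _ hb0)) hb0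
  have hBneV : B ≠ V := by
    intro h
    exact hdisj a0 ha0 (by rw [h]; exact hABV (Finset.mem_union_left _ ha0))
  have hsing : ∀ x : X, ({x} : Finset X) ≠ A ∪ B := by
    intro x h
    have h1 : a0 = x := by
      have := Finset.mem_union_left B ha0
      rw [← h] at this; simpa using this
    have h2 : b0 = x := by
      have := Finset.mem_union_right A hb0
      rw [← h] at this; simpa using this
    exact hdisj x (h1 ▸ ha0) (h2 ▸ hb0)
  refine ⟨fun C => if C = A ∪ B then V else δ C, ?_, ?_, ?_, ?_⟩
  · intro C hC
    dsimp only
    rcases mem_binding_s17.mp hC with ⟨hCT, -⟩ | rfl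
    · rw [if_neg (fun h : C = A ∪ B => hUmem (h ▸ hCT))]; exact hδ.1 C hCT
    · rw [if_pos rfl]; exact hV
  · intro x
    dsimp only
    rw [if_neg (hsing x)]
    exact hδ.2.1 x
  · intro C hC
    dsimp only
    rcases mem_binding_s17.mp hC with ⟨hCT, -⟩ | rfl
    · rw [if_neg (fun h : C = A ∪ B => hUmem (h ▸ hCT))]; exact hδ.2.2.1 C hCT
    · rw [if_pos rfl]; exact hABV
  · intro C1 h1 C2 h2 h12
    dsimp only
    rcases mem_binding_s17.mp h2 with ⟨hC2T, hc2⟩ | rfl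
    · rw [if_neg (fun h : C2 = A ∪ B => hUmem (h ▸ hC2T))]
      rcases mem_binding_s17.mp h1 with ⟨hC1T, hc1⟩ | rfl
      · rw [if_neg (fun h : C1 = A ∪ B => hUmem (h ▸ hC1T))]
        exact hδ.2.2.2 C1 hC1T C2 hC2T h12
      · rw [if_pos rfl]
        have hAC2 : A ⊂ C2 := by
          refine Finset.ssubset_iff_subset_ne.mpr
            ⟨Finset.subset_union_left.trans h12.subset, ?_⟩
          rintro rfl
          exact hdisj b0 (h12.subset (Finset.mem_union_right _ hb0)) hb0
        have hDC2 : D ⊆ C2 := maxsub_parent hT hA C2 hC2T hAC2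
        have hδD : δ D ⊆ δ C2 := by
          rcases eq_or_ne D C2 with rfl | hne
          · exact Finset.Subset.refl _
          · exact (hδ.2.2.2 D hA.2.1 C2 hC2T (Finset.ssubset_iff_subset_ne.mpr ⟨hDC2, hne⟩)).subset
        exact ssub_trans hVD hδD
    · rw [if_pos rfl]
      have hne1 : C1 ≠ A ∪ B := (Finset.ssubset_iff_subset_ne.mp h12).2
      rcases mem_binding_s17.mp h1 with ⟨hC1T, hc1⟩ | rfl
      · rw [if_neg hne1]
        rcases sub_union hT hA hB hAB C1 hC1T h12.subset with h | h | h
        · rcases eq_or_ne C1 A with rfl | hneA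
          · have hcard : ¬ 1 < C1.card := fun hh => hc1 ⟨Or.inl rfl, hh⟩
            have hc1' : C1.card = 1 :=
              le_antisymm (not_lt.mp hcard) (Finset.card_pos.mpr ⟨a0, ha0⟩)
            obtain ⟨y, hy⟩ := Finset.card_eq_one.mp hc1'
            rw [hy, hδ.2.1]
            refine Finset.ssubset_iff_subset_ne.mpr ⟨?_, ?_⟩
            · rw [← hy]; exact Finset.subset_union_left.trans hABV
            · rw [← hy]; exact hAneV
          · exact hAV C1 hC1T (Finset.ssubset_iff_subset_ne.mpr ⟨h, hneA⟩)
        · rcases eq_or_ne C1 B with rfl | hneB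
          · have hcard : ¬ 1 < C1.card := fun hh => hc1 ⟨Or.inr rfl, hh⟩
            have hc1' : C1.card = 1 :=
              le_antisymm (not_lt.mp hcard) (Finset.card_pos.mpr ⟨b0, hb0⟩)
            obtain ⟨y, hy⟩ := Finset.card_eq_one.mp hc1'
            rw [hy, hδ.2.1]
            refine Finset.ssubset_iff_subset_ne.mpr ⟨?_, ?_⟩
            · rw [← hy]; exact Finset.subset_union_right.trans hABV
            · rw [← hy]; exact hBneV
          · exact hBV C1 hC1T (Finset.ssubset_iff_subset_ne.mpr ⟨h, hneB⟩)
        · exact absurd h hne1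
      · exact absurd rfl hne1

lemma key_lemma {T T' : Finset (Finset X)} (hT : IsHierarchy T) (hT' : IsHierarchy T')
    (hle : LeHP T T') (hne : T ≠ T') :
    ∃ A B D : Finset X, A ≠ B ∧ IsMaxSub T A D ∧ IsMaxSub T B D ∧ A ∪ B ≠ D ∧
      A ∪ B ∉ T ∧ IsHierarchy (binding T A B) ∧ LeHP T (binding T A B) ∧
      LeHP (binding T A B) T' := by
  classical
  obtain ⟨δ, hδ⟩ := hle
  by_cases hid : ∀ C ∈ T, δ C = C
  · -- Case 1 : T ⊆ T'
    have hsub : T ⊆ T' := by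
      intro C hC
      have := hδ.1 C hC
      rwa [hid C hC] at this
    obtain ⟨Cw, hCw', hCwT⟩ :=
      Finset.exists_of_ssubset (Finset.ssubset_iff_subset_ne.mpr ⟨hsub, hne⟩)
    have hCwne : Cw.Nonempty := hier_ne hT' hCw'
    have hCwu : Cw ≠ Finset.univ := by
      intro h; exact hCwT (h ▸ hT.1)
    obtain ⟨a, ha⟩ := hier_ne hT' hCw'
    have hsa : ({a} : Finset X) ≠ Cw := fun h => hCwT (h ▸ hT.2.1 a)
    obtain ⟨A, hAT, haA, hACw, maxA⟩ := exists_max_sub hT ha hsa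
    obtain ⟨b, hbCw, hbA⟩ := Finset.exists_of_ssubset hACw
    have hsb : ({b} : Finset X) ≠ Cw := fun h => hCwT (h ▸ hT.2.1 b)
    obtain ⟨B, hBT, hbB, hBCw, maxB⟩ := exists_max_sub hT hbCw hsb
    obtain ⟨D, hDT, hCwD, minD⟩ := exists_min_sup hT hCwne hCwu
    have hAB : A ≠ B := fun h => hbA (h ▸ hbB)
    have hchild : ∀ {A₀ : Finset X}, A₀ ∈ T → A₀ ⊂ Cw →
        (∀ E ∈ T, A₀ ⊂ E → ¬ E ⊂ Cw) → IsMaxSub T A₀ D := by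
      intro A₀ hA₀T hA₀Cw max₀
      refine ⟨hA₀T, hDT, ssub_trans hA₀Cw hCwD.subset, ?_⟩
      rintro E hE ⟨hAE, hED⟩
      have hEne : (E ∩ Cw).Nonempty := (hier_ne hT hA₀T).mono
          (Finset.subset_inter hAE.subset hA₀Cw.subset)
      rcases hier_nested hT' (hsub hE) hCw' hEne with h | h
      · exact max₀ E hE hAE (Finset.ssubset_iff_subset_ne.mpr
          ⟨h, fun hh => hCwT (hh ▸ hE)⟩)
      · have hCwE : Cw ⊂ E := Finset.ssubset_iff_subset_ne.mpr
          ⟨h, fun hh => hCwT (by rw [hh]; exact hE)⟩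
        exact ssubset_irrefl E (ssub_trans hED (minD E hE hCwE))
    have hAsub := hchild hAT hACw maxA
    have hBsub := hchild hBT hBCw maxB
    have hUD : A ∪ B ≠ D := by
      intro h
      have hDCw : D ⊆ Cw := by
        rw [← h]; exact Finset.union_subset hACw.subset hBCw.subset
      exact ssubset_irrefl Cw (ssub_trans hCwD hDCw)
    refine ⟨A, B, D, hAB, hAsub, hBsub, hUD, union_notMem hT hAsub hBsub hAB hUD,
      binding_hier hT hAsub hBsub hAB hUD, le_binding_left hT hAsub hBsub hAB hUD, ?_⟩
    refine le_binding_right hT hδ hAsub hBsub hAB hUD hCw'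
      (Finset.union_subset hACw.subset hBCw.subset) ?_ ?_ ?_
    · intro C hC hCA
      rw [hid C hC]
      exact ssub_trans hCA hACw.subset
    · intro C hC hCB
      rw [hid C hC]
      exact ssub_trans hCB hBCw.subset
    · rw [hid D hDT]; exact hCwD
  · -- Case 2
    push_neg at hid
    obtain ⟨G0, hG0T, hG0⟩ := hid
    have hSne : (T.filter fun C => δ C ≠ C).Nonempty :=
      ⟨G0, Finset.mem_filter.mpr ⟨hG0T, hG0⟩⟩
    obtain ⟨G, hGmem, maxG⟩ := Finset.exists_max_image _ Finset.card hSne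
    rw [Finset.mem_filter] at hGmem
    obtain ⟨hGT, hGδ⟩ := hGmem
    have hGne : G.Nonempty := hier_ne hT hGT
    have hGsub : G ⊂ δ G := Finset.ssubset_iff_subset_ne.mpr
      ⟨hδ.2.2.1 G hGT, fun h => hGδ h.symm⟩
    have hGu : G ≠ Finset.univ := by
      rintro rfl
      exact hGδ (Finset.univ_subset_iff.mp (hδ.2.2.1 _ hGT))
    obtain ⟨D', hD'T, hGD', minD'⟩ := exists_min_sup hT hGne hGu
    have hδD' : δ D' = D' := by
      by_contra h
      have hmem : D' ∈ T.filter fun C => δ C ≠ C := Finset.mem_filter.mpr ⟨hD'T, h⟩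
      exact absurd (maxG D' hmem) (Finset.card_lt_card hGD').not_ge
    have hδGD' : δ G ⊂ D' := by
      have := hδ.2.2.2 G hGT D' hD'T hGD'
      rwa [hδD'] at this
    obtain ⟨x, hxδG, hxG⟩ := Finset.exists_of_ssubset hGsub
    have hxD' : x ∈ D' := hδGD'.subset hxδG
    have hsx : ({x} : Finset X) ≠ D' := by
      intro h
      have hGx : G ⊆ ({x} : Finset X) := by rw [h]; exact hGD'.subset
      rcases Finset.subset_singleton_iff.mp hGx with h0 | h0
      · exact hGne.ne_empty h0
      · exact hxG (by rw [h0]; exact Finset.mem_singleton_self x)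
    obtain ⟨B, hBT, hxB, hBD', maxB⟩ := exists_max_sub hT hxD' hsx
    have hAB : G ≠ B := fun h => hxG (h ▸ hxB)
    have hGsub' : IsMaxSub T G D' := ⟨hGT, hD'T, hGD', fun E hE hconj =>
      ssubset_irrefl E (ssub_trans hconj.2 (minD' E hE hconj.1))⟩
    have hBsub : IsMaxSub T B D' := ⟨hBT, hD'T, hBD', fun E hE hconj =>
      maxB E hE hconj.1 hconj.2⟩
    have hnested : δ G ⊆ δ B ∨ δ B ⊆ δ G := by
      apply hier_nested hT' (hδ.1 G hGT) (hδ.1 B hBT)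
      exact ⟨x, Finset.mem_inter.mpr ⟨hxδG, hδ.2.2.1 B hBT hxB⟩⟩
    have hδBD' : δ B ⊂ D' := by
      have := hδ.2.2.2 B hBT D' hD'T hBD'
      rwa [hδD'] at this
    have hUD : G ∪ B ≠ D' := by
      intro h
      rcases hnested with h0 | h0
      · have hsub2 : D' ⊆ δ B := by
          rw [← h]
          exact Finset.union_subset ((hδ.2.2.1 G hGT).trans h0) (hδ.2.2.1 B hBT)
        exact ssubset_irrefl D' (sub_ssub_trans hsub2 hδBD')
      · have hsub2 : D' ⊆ δ G := by
          rw [← h]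
          exact Finset.union_subset (hδ.2.2.1 G hGT) ((hδ.2.2.1 B hBT).trans h0)
        exact ssubset_irrefl D' (sub_ssub_trans hsub2 hδGD')
    refine ⟨G, B, D', hAB, hGsub', hBsub, hUD, union_notMem hT hGsub' hBsub hAB hUD,
      binding_hier hT hGsub' hBsub hAB hUD, le_binding_left hT hGsub' hBsub hAB hUD, ?_⟩
    rcases hnested with h0 | h0
    · -- V := δ B
      refine le_binding_right hT hδ hGsub' hBsub hAB hUD (hδ.1 B hBT)
        (Finset.union_subset ((hδ.2.2.1 G hGT).trans h0) (hδ.2.2.1 B hBT)) ?_ ?_ ?_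
      · intro C hC hCG
        exact ssub_trans (hδ.2.2.2 C hC G hGT hCG) h0
      · intro C hC hCB
        exact hδ.2.2.2 C hC B hBT hCB
      · rw [hδD']; exact hδBD'
    · -- V := δ G
      refine le_binding_right hT hδ hGsub' hBsub hAB hUD (hδ.1 G hGT)
        (Finset.union_subset (hδ.2.2.1 G hGT) ((hδ.2.2.1 B hBT).trans h0)) ?_ ?_ ?_
      · intro C hC hCG
        exact hδ.2.2.2 C hC G hGT hCG
      · intro C hC hCB
        exact ssub_trans (hδ.2.2.2 C hC B hBT hCB) h0
      · rw [hδD']; exact hδGD'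


/-- if `T'` covers `T` (i.e. `d_HP(T,T') = 1` with `T ≤_HP T'`), then `T'`
is the binding of `T` at `A ∪ B` for some pair of distinct inclusion-maximal subclusters
`A, B` of a common cluster; in particular `H(T) \ H(T') ⊆ {A, B}`,
`H(T') \ H(T) = {A ∪ B}`, and the symmetric difference has at most three clusters. -/
theorem covers_structure (T T' : Finset (Finset X))
    (hT : IsHierarchy T) (hT' : IsHierarchy T') (hcov : CoversHP T T') :
    ∃ A B D : Finset X, A ≠ B ∧ IsMaxSub T A D ∧ IsMaxSub T B D ∧ A ∪ B ≠ D ∧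
      T' = binding T A B ∧
      T \ T' ⊆ {A, B} ∧ T' \ T = {A ∪ B} ∧ (T \ T' ∪ T' \ T).card ≤ 3 := by
  obtain ⟨hle, hneq, hmin⟩ := hcov
  obtain ⟨A, B, D, hAB, hAs, hBs, hUD, hUT, hbh, hbl, hbr⟩ := key_lemma hT hT' hle hneq
  have hbne : binding T A B ≠ T := by
    intro h
    exact hUT (h ▸ (mem_binding_s17.mpr (Or.inr rfl)))
  have hbt' : binding T A B = T' := by
    rcases hmin _ hbh hbl hbr with h | h
    · exact absurd h hbne
    · exact h
  have hd1 : T \ T' ⊆ {A, B} := by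
    intro C hC
    rw [Finset.mem_sdiff] at hC
    obtain ⟨hCT, hCb⟩ := hC
    have h1 : ¬((C ∈ T ∧ ¬((C = A ∨ C = B) ∧ 1 < C.card)) ∨ C = A ∪ B) := by
      rw [← mem_binding_s17, hbt']; exact hCb
    have h2 : C = A ∨ C = B := by
      by_contra hcon
      exact h1 (Or.inl ⟨hCT, fun hh => hcon hh.1⟩)
    simpa only [Finset.mem_insert, Finset.mem_singleton] using h2
  have hd2 : T' \ T = {A ∪ B} := by
    ext C
    rw [Finset.mem_sdiff, Finset.mem_singleton, ← hbt', mem_binding_s17]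
    constructor
    · rintro ⟨h | rfl, hCT⟩
      · exact absurd h.1 hCT
      · rfl
    · rintro rfl
      exact ⟨Or.inr rfl, hUT⟩
  refine ⟨A, B, D, hAB, hAs, hBs, hUD, hbt'.symm, hd1, hd2, ?_⟩
  have hsub2 : T \ T' ∪ T' \ T ⊆ {A, B, A ∪ B} := by
    intro C hC
    rcases Finset.mem_union.mp hC with h | h
    · rcases Finset.mem_insert.mp (hd1 h) with h0 | h0
      · exact Finset.mem_insert.mpr (Or.inl h0)
      · rw [Finset.mem_singleton] at h0
        exact Finset.mem_insert.mpr (Or.inr (Finset.mem_insert.mpr (Or.inl h0)))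
    · rw [hd2, Finset.mem_singleton] at h
      subst h
      exact Finset.mem_insert.mpr (Or.inr (Finset.mem_insert.mpr (Or.inr
        (Finset.mem_singleton_self _))))
  have h3 : ({A, B, A ∪ B} : Finset (Finset X)).card ≤ 3 := by
    apply le_trans (Finset.card_insert_le _ _)
    have h4 := Finset.card_insert_le B ({A ∪ B} : Finset (Finset X))
    simp only [Finset.card_singleton] at h4
    omega
  exact le_trans (Finset.card_le_card hsub2) h3
end

section
/- The multi-hierarchy construction: let H and H' be hierarchies on X. Then the collection of all nonempty sets of the form A ∩ B, where A and B are produced by the MAKEMULTI iterative intersection process (repeatedly intersecting inclusion-maximal clusters of H with inclusion-maximal clusters of H', then deleting these maximal layers and recursing), forms a laminar family: any two produced sets are either disjoint or nested. -/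
open Finset

variable {X : Type*} [DecidableEq X] [Fintype X]

/-- The inclusion-maximal members of a family of sets. -/
def maxLayer (H : Finset (Finset X)) : Finset (Finset X) :=
  H.filter fun A => ∀ B ∈ H, ¬A ⊂ B

/-- The family remaining after `r` rounds of deleting the inclusion-maximal layer. -/
def iterDel (H : Finset (Finset X)) : ℕ → Finset (Finset X)
  | 0 => H
  | r + 1 => iterDel H r \ maxLayer (iterDel H r)

/-- The sets produced by the MAKEMULTI process on `H` and `H'`: in round `r` one records
all nonempty intersections of current inclusion-maximal clusters of `H` with current
inclusion-maximal clusters of `H'`. -/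
def makeMulti (H H' : Finset (Finset X)) : Set (Finset X) :=
  {C | ∃ r : ℕ, ∃ A ∈ maxLayer (iterDel H r), ∃ B ∈ maxLayer (iterDel H' r),
    C = A ∩ B ∧ C ≠ ∅}

lemma iterDel_mono (H : Finset (Finset X)) {r s : ℕ} (h : r ≤ s) :
    iterDel H s ⊆ iterDel H r := by
  induction s with
  | zero =>
    obtain rfl : r = 0 := Nat.le_zero.mp h
    exact Finset.Subset.refl _
  | succ n ih =>
    rcases Nat.lt_or_ge r (n + 1) with h' | h'
    · exact Finset.Subset.trans (Finset.sdiff_subset) (ih (Nat.lt_succ_iff.mp h'))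
    · obtain rfl : r = n + 1 := le_antisymm h h'
      exact Finset.Subset.refl _

lemma maxLayer_rel (H : Finset (Finset X)) (hH : IsHierarchy H) {r s : ℕ} (hrs : r < s)
    {A A' : Finset X} (hA : A ∈ maxLayer (iterDel H r)) (hA' : A' ∈ maxLayer (iterDel H s)) :
    A ∩ A' = ∅ ∨ A' ⊆ A := by
  obtain ⟨hA1, hA2⟩ := Finset.mem_filter.mp hA
  obtain ⟨hA'1, _⟩ := Finset.mem_filter.mp hA'
  have hAH : A ∈ H := iterDel_mono H (Nat.zero_le r) hA1
  have hA'H : A' ∈ H := iterDel_mono H (Nat.zero_le s) hA'1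
  have hA'r : A' ∈ iterDel H r := iterDel_mono H (Nat.le_of_lt hrs) hA'1
  have hne : A ≠ A' := by
    rintro rfl
    have : A ∈ iterDel H (r + 1) := iterDel_mono H hrs hA'1
    exact (Finset.mem_sdiff.mp this).2 hA
  rcases hH.2.2.2 A hAH A' hA'H with h | h | h
  · exact Or.inl h
  · exact absurd (HasSubset.Subset.ssubset_of_ne h hne) (hA2 A' hA'r)
  · exact Or.inr h

lemma maxLayer_same (H : Finset (Finset X)) (hH : IsHierarchy H) {r : ℕ}
    {A A' : Finset X} (hA : A ∈ maxLayer (iterDel H r)) (hA' : A' ∈ maxLayer (iterDel H r)) :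
    A = A' ∨ A ∩ A' = ∅ := by
  obtain ⟨hA1, hA2⟩ := Finset.mem_filter.mp hA
  obtain ⟨hA'1, hA'2⟩ := Finset.mem_filter.mp hA'
  have hAH : A ∈ H := iterDel_mono H (Nat.zero_le r) hA1
  have hA'H : A' ∈ H := iterDel_mono H (Nat.zero_le r) hA'1
  by_cases hne : A = A'
  · exact Or.inl hne
  rcases hH.2.2.2 A hAH A' hA'H with h | h | h
  · exact Or.inr h
  · exact absurd (HasSubset.Subset.ssubset_of_ne h hne) (hA2 A' hA'1)
  · exact absurd (HasSubset.Subset.ssubset_of_ne h (Ne.symm hne)) (hA'2 A hA1)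

lemma makeMulti_lt (H H' : Finset (Finset X)) (hH : IsHierarchy H) (hH' : IsHierarchy H')
    {r s : ℕ} (hrs : r < s) {A B A' B' : Finset X}
    (hA : A ∈ maxLayer (iterDel H r)) (hB : B ∈ maxLayer (iterDel H' r))
    (hA' : A' ∈ maxLayer (iterDel H s)) (hB' : B' ∈ maxLayer (iterDel H' s)) :
    (A ∩ B) ∩ (A' ∩ B') = ∅ ∨ (A' ∩ B') ⊆ (A ∩ B) := by
  have h1 : (A ∩ B) ∩ (A' ∩ B') ⊆ A ∩ A' := by
    intro x hx
    simp only [Finset.mem_inter] at hx ⊢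
    tauto
  have h2 : (A ∩ B) ∩ (A' ∩ B') ⊆ B ∩ B' := by
    intro x hx
    simp only [Finset.mem_inter] at hx ⊢
    tauto
  rcases maxLayer_rel H hH hrs hA hA' with h | h
  · exact Or.inl (Finset.subset_empty.mp (h ▸ h1))
  rcases maxLayer_rel H' hH' hrs hB hB' with h' | h'
  · exact Or.inl (Finset.subset_empty.mp (h' ▸ h2))
  · refine Or.inr ?_
    intro x hx
    simp only [Finset.mem_inter] at hx ⊢
    exact ⟨h hx.1, h' hx.2⟩

/-- the family of sets produced by MAKEMULTI from two hierarchies is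
laminar: any two produced sets are disjoint or nested. -/
theorem makeMulti_laminar (H H' : Finset (Finset X))
    (hH : IsHierarchy H) (hH' : IsHierarchy H') :
    ∀ C ∈ makeMulti H H', ∀ D ∈ makeMulti H H', C ∩ D = ∅ ∨ C ⊆ D ∨ D ⊆ C := by
  intro C hC D hD
  obtain ⟨r, A, hA, B, hB, rfl, hCne⟩ := hC
  obtain ⟨s, A', hA', B', hB', rfl, hDne⟩ := hD
  rcases lt_trichotomy r s with hrs | rfl | hsr
  · rcases makeMulti_lt H H' hH hH' hrs hA hB hA' hB' with h | h
    · exact Or.inl h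
    · exact Or.inr (Or.inr h)
  · rcases maxLayer_same H hH hA hA' with rfl | h
    · rcases maxLayer_same H' hH' hB hB' with rfl | h'
      · exact Or.inr (Or.inl (Finset.Subset.refl _))
      · refine Or.inl (Finset.subset_empty.mp (h' ▸ ?_))
        intro x hx
        simp only [Finset.mem_inter] at hx ⊢
        tauto
    · refine Or.inl (Finset.subset_empty.mp (h ▸ ?_))
      intro x hx
      simp only [Finset.mem_inter] at hx ⊢
      tauto
  · rcases makeMulti_lt H H' hH hH' hsr hA' hB' hA hB with h | h
    · rw [Finset.inter_comm] at h
      exact Or.inl h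
    · exact Or.inr (Or.inl h)
end
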